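/- arXiv:1306.0662 — 3 statements merged into one kernel-verified Lean document; each statement's English description precedes it below -/
import Mathlib

section
/- Let Σ be finite, π : Σ* → Σ_o* a projection. Let L_f ⊆ Σ* and let L_ωnf be a set of infinite words over Σ. Suppose: (a) every element of L_ωnf has infinitely many letters in Σ_o after projection (so its projection is an infinite word over Σ_o); (b) π extends to infinite words. Define L_ωf = { u·v | u ∈ L_f, v ∈ Σ_o^ω } (the prefaulty words extended by arbitrary infinite observable suffixes). Then π(L_f) ∩ π(Pref(L_ωnf)) = ∅ if and only if π(L_ωf) ∩ π(L_ωnf) = ∅, where Pref(L_ωnf) denotes the set of finite prefixes of words in L_ωnf. -/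
/-- Erasing projection on finite words. -/
def proj {A : Type*} (So : Set A) [DecidablePred (· ∈ So)] (w : List A) : List A :=
  w.filter (fun a => decide (a ∈ So))

/-- Erasing projection on infinite words (meaningful when `{n | w n ∈ So}` is infinite). -/
noncomputable def projω {A : Type*} (So : Set A) (w : ℕ → A) : ℕ → A :=
  fun i => w (Nat.nth (fun n => w n ∈ So) i)

/-- Concatenation of a finite word with an infinite word. -/
def catInf {A : Type*} (u : List A) (v : ℕ → A) : ℕ → A :=
  fun n => if h : n < u.length then u.get ⟨n, h⟩ else v (n - u.length)

/-- Finite prefixes of a set of infinite words. -/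
def Pref {A : Type*} (L : Set (ℕ → A)) : Set (List A) :=
  {u | ∃ w ∈ L, ∀ i : Fin u.length, u.get i = w i.val}

/-! The projection of the length-`m` prefix of `w` is the length-`count m` prefix of `projω w`,
and `projω (u · v) = proj u · v` when every letter of `v` is observable. Since a word of `Lωnf`
has infinitely many observable letters, every prefix of its projection is the projection of one
of its prefixes, and the projection splits as `proj (prefix) · (observable remainder)`. -/

theorem Nat.nth_count_add_of_forall_le {p : ℕ → Prop} [DecidablePred p] {m : ℕ}
    (hp : ∀ n, m ≤ n → p n) (j : ℕ) : Nat.nth p (Nat.count p m + j) = m + j := by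
  have hcount : Nat.count p (m + j) = Nat.count p m + j := by
    rw [Nat.count_add, Nat.count_of_forall fun k _ => hp _ (Nat.le_add_right m k)]
  rw [← hcount, Nat.nth_count (hp _ (Nat.le_add_right m j))]

section Words

variable {A : Type*}

theorem ofFn_catInf (u : List A) (v : ℕ → A) :
    List.ofFn (fun i : Fin u.length => catInf u v i) = u :=
  List.ext_get (by simp) fun n _ _ => by simp [catInf]

theorem catInf_ofFn_add (s : ℕ → A) (k : ℕ) :
    catInf (List.ofFn fun i : Fin k => s i) (fun j => s (k + j)) = s := by
  funext n
  by_cases hn : n < k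
  · simp [catInf, hn]
  · simp [catInf, hn, Nat.add_sub_cancel' (Nat.le_of_not_lt hn)]

theorem mem_Pref_iff {L : Set (ℕ → A)} {u : List A} :
    u ∈ Pref L ↔ ∃ w ∈ L, ∃ m, List.ofFn (fun i : Fin m => w i) = u := by
  constructor
  · rintro ⟨w, hw, h⟩
    exact ⟨w, hw, u.length, List.ext_get (by simp) fun n _ hn => by simpa using (h ⟨n, hn⟩).symm⟩
  · rintro ⟨w, hw, m, rfl⟩
    exact ⟨w, hw, fun i => by simp⟩

theorem projω_mem (So : Set A) {w : ℕ → A} (hw : {n | w n ∈ So}.Infinite) (i : ℕ) :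
    projω So w i ∈ So :=
  Nat.nth_mem_of_infinite hw i

variable (So : Set A) [DecidablePred (· ∈ So)]

theorem proj_ofFn (w : ℕ → A) (m : ℕ) :
    proj So (List.ofFn fun i : Fin m => w i) =
      List.ofFn fun i : Fin (Nat.count (fun n => w n ∈ So) m) => projω So w i := by
  induction m with
  | zero => simp [proj]
  | succ m ih =>
    by_cases hm : w m ∈ So
    · have hproj : projω So w (Nat.count (fun n => w n ∈ So) m) = w m := by
        rw [projω, Nat.nth_count (p := fun n => w n ∈ So) hm]
      rw [Nat.count_succ_eq_succ_count hm, List.ofFn_succ', List.ofFn_succ']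
      simp only [proj, List.concat_eq_append, List.filter_append] at ih ⊢
      simp [ih, hm, hproj]
    · rw [Nat.count_succ_eq_count hm, List.ofFn_succ']
      simp only [proj, List.concat_eq_append, List.filter_append] at ih ⊢
      simp [ih, hm]

theorem projω_catInf (u : List A) {v : ℕ → A} (hv : ∀ n, v n ∈ So) :
    projω So (catInf u v) = catInf (proj So u) v := by
  set x := catInf u v
  set k := Nat.count (fun n => x n ∈ So) u.length
  have hprefix : proj So u = List.ofFn fun i : Fin k => projω So x i := by
    rw [← proj_ofFn, ofFn_catInf]
  have hsuffix : ∀ n, u.length ≤ n → x n ∈ So := fun n hn => by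
    simpa [x, catInf, Nat.not_lt.mpr hn] using hv (n - u.length)
  calc projω So x
        = catInf (List.ofFn fun i : Fin k => projω So x i) (fun j => projω So x (k + j)) :=
          (catInf_ofFn_add _ k).symm
    _ = catInf (proj So u) v := by
      rw [hprefix]
      congr 1
      funext j
      simp only [projω, k, Nat.nth_count_add_of_forall_le hsuffix]
      simp [x, catInf]

end Words

/-- untimed Lemma 2: with `Lωf = Lf · So^ω`,
`π(Lf) ∩ π(Pref(Lωnf)) = ∅ ↔ π(Lωf) ∩ π(Lωnf) = ∅`. -/
theorem finite_disjoint_iff_omega_disjoint {A : Type*} (So : Set A)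
    [DecidablePred (· ∈ So)] (Lf : Set (List A)) (Lωnf : Set (ℕ → A))
    (hObs : ∀ w ∈ Lωnf, {n | w n ∈ So}.Infinite) :
    (proj So '' Lf ∩ proj So '' Pref Lωnf = ∅) ↔
    (projω So '' {x | ∃ u ∈ Lf, ∃ v : ℕ → A, (∀ n, v n ∈ So) ∧ x = catInf u v} ∩
      projω So '' Lωnf = ∅) := by
  simp only [Set.eq_empty_iff_forall_notMem]
  constructor
  · rintro h _ ⟨⟨_, ⟨u, hu, v, hv, rfl⟩, hx⟩, w, hw, rfl⟩
    rw [projω_catInf So u hv] at hx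
    obtain ⟨m, hm⟩ := Nat.surjective_count_of_infinite_setOfPred (hObs w hw) (proj So u).length
    have hprefix : (List.ofFn fun i : Fin (proj So u).length => projω So w i) = proj So u := by
      rw [← hx]
      exact ofFn_catInf _ _
    have hu' : proj So (List.ofFn fun i : Fin m => w i) = proj So u := by
      rw [proj_ofFn, hm, hprefix]
    exact h _ ⟨⟨u, hu, rfl⟩, _, mem_Pref_iff.2 ⟨w, hw, m, rfl⟩, hu'⟩
  · rintro h _ ⟨⟨u, hu, rfl⟩, _, hu', hproj⟩
    obtain ⟨w, hw, m, rfl⟩ := mem_Pref_iff.1 hu'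
    set k := Nat.count (fun n => w n ∈ So) m
    have hv : ∀ j, projω So w (k + j) ∈ So := fun j => projω_mem So (hObs w hw) _
    refine h (projω So w) ⟨⟨_, ⟨u, hu, _, hv, rfl⟩, ?_⟩, w, hw, rfl⟩
    rw [projω_catInf So u hv, ← hproj, proj_ofFn, catInf_ofFn_add]
end

section
/- Let A be a finite automaton with fault event f, π the observation projection, L_f^{-k} the set of fault-free traces extendable to a fault within at most k further steps, and L^ω_{¬f} the set of infinite fault-free traces. Then A is k-predictable (i.e., π(L_f^{-k}) ∩ π(Pref(L^ω_{¬f})) = ∅) if and only if A is k'-predictable for all k' ≤ k; moreover the largest k for which A is k-predictable equals M − 1, where M is the minimum over all states (s₁, s₂) reachable in the twin plant A₁(0) × A₂ of the shortest distance d_f(s₁) from s₁ to a state where f is enabled. -/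
/-- A finite run from `q` to `q'` labeled by the word `w`. -/
def RunOn {Q A : Type*} (E : Q → A → Q → Prop) (q : Q) (w : List A) (q' : Q) : Prop :=
  ∃ p : ℕ → Q, p 0 = q ∧ p w.length = q' ∧
    ∀ i : Fin w.length, E (p i.val) (w.get i) (p (i.val + 1))

/-- The fault `f` is enabled at `q`. -/
def Enabled {Q A : Type*} (E : Q → A → Q → Prop) (f : A) (q : Q) : Prop := ∃ q', E q f q'

/-- There is an infinite fault-free run from `q`. -/
def InfFF {Q A : Type*} (E : Q → A → Q → Prop) (f : A) (q : Q) : Prop :=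
  ∃ (p : ℕ → Q) (a : ℕ → A), p 0 = q ∧ ∀ i, E (p i) (a i) (p (i + 1)) ∧ a i ≠ f

private lemma enat_exists_of_sInf_le {S : Set ℕ∞} {k : ℕ} (h : sInf S ≤ (k:ℕ∞)) :
    ∃ x ∈ S, x ≤ (k:ℕ∞) := by
  by_contra hc
  push_neg at hc
  have h1 : (k:ℕ∞) + 1 ≤ sInf S :=
    le_sInf fun x hx => (ENat.add_one_le_iff (by simp)).mpr (hc x hx)
  have h2 := h1.trans h
  have h3 : ((k+1:ℕ) : ℕ∞) ≤ (k:ℕ∞) := by push_cast; exact h2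
  have := Nat.cast_le.mp h3
  omega

/-- `k`-predictability is downward closed, and `A` is `k`-predictable iff
`k < M`, where `M` is the minimum over reachable twin-plant states `(s₁,s₂)` of the
shortest distance `d_f s₁` to an `f`-enabled state (so the largest predictable `k`
is `M - 1`). -/
theorem k_predictability_characterization {Q A : Type*} [Fintype Q]
    (E : Q → A → Q → Prop) (f : A) (So : Set A) [DecidablePred (· ∈ So)] (q0 : Q) :
    let π : List A → List A := fun w => w.filter (fun a => decide (a ∈ So))
    -- fault-free traces extendable (fault-free) to an f-enabled state in ≤ k steps
    let Lfk : ℕ → Set (List A) := fun k =>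
      {w | f ∉ w ∧ ∃ q', RunOn E q0 w q' ∧
        ∃ v : List A, v.length ≤ k ∧ f ∉ v ∧ ∃ q'', RunOn E q' v q'' ∧ Enabled E f q''}
    -- infinite fault-free traces
    let Lω : Set (ℕ → A) :=
      {a | ∃ p : ℕ → Q, p 0 = q0 ∧ ∀ i, E (p i) (a i) (p (i + 1)) ∧ a i ≠ f}
    let PrefLω : Set (List A) := {u | ∃ w ∈ Lω, ∀ i : Fin u.length, u.get i = w i.val}
    let Pred : ℕ → Prop := fun k => π '' Lfk k ∩ π '' PrefLω = ∅
    -- shortest distance to an f-enabled state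
    let df : Q → ℕ∞ := fun q =>
      sInf {m : ℕ∞ | ∃ n : ℕ, m = (n : ℕ∞) ∧ ∃ p : ℕ → Q, p 0 = q ∧
        (∀ i < n, ∃ b, E (p i) b (p (i + 1))) ∧ Enabled E f (p n)}
    -- reachable states of the twin plant A₁(0) × A₂
    let Reach : Set (Q × Q) :=
      {s | ∃ w₁ w₂ : List A, f ∉ w₁ ∧ f ∉ w₂ ∧ RunOn E q0 w₁ s.1 ∧ RunOn E q0 w₂ s.2 ∧
        π w₁ = π w₂ ∧ InfFF E f s.2}
    let M : ℕ∞ := sInf ((fun s : Q × Q => df s.1) '' Reach)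
    (∀ k : ℕ, Pred k ↔ ∀ k' ≤ k, Pred k') ∧
    (∀ k : ℕ, Pred k ↔ (k : ℕ∞) < M) := by
  classical
  intro π Lfk Lω PrefLω Pred df Reach M
  have key : ∀ k : ℕ, ¬ Pred k ↔ M ≤ (k : ℕ∞) := by
    intro k
    have hne : ¬ Pred k ↔ (π '' Lfk k ∩ π '' PrefLω).Nonempty := by
      exact Set.nonempty_iff_ne_empty.symm
    rw [hne]
    constructor
    · -- nonempty intersection → M ≤ k
      rintro ⟨x, ⟨w, hw, rfl⟩, ⟨u, hu, hxu⟩⟩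
      obtain ⟨hfw, q', hrun, v, hvlen, hfv, q'', hrunv, hen⟩ := hw
      obtain ⟨a, ⟨p, hp0, hpa⟩, hpref⟩ := hu
      have hfu : f ∉ u := by
        intro hf
        obtain ⟨i, hi⟩ := List.mem_iff_get.mp hf
        exact (hpa i).2 (((hpref i).symm.trans hi))
      have hReach : (q', p u.length) ∈ Reach := by
        refine ⟨w, u, hfw, hfu, hrun, ⟨p, hp0, rfl, fun i => ?_⟩, hxu.symm, ?_⟩
        · rw [hpref i]; exact (hpa i).1
        · exact ⟨fun i => p (u.length + i), fun i => a (u.length + i), by simp,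
            fun i => ⟨(hpa (u.length + i)).1, (hpa (u.length + i)).2⟩⟩
      have hdf : df q' ≤ (k : ℕ∞) := by
        obtain ⟨pv, hpv0, hpvn, hpvE⟩ := hrunv
        have hmem : df q' ≤ (v.length : ℕ∞) := sInf_le ⟨v.length, rfl, pv, hpv0,
          fun i hi => ⟨v.get ⟨i, hi⟩, hpvE ⟨i, hi⟩⟩, hpvn ▸ hen⟩
        exact le_trans hmem (by exact_mod_cast hvlen)
      exact le_trans (sInf_le ⟨(q', p u.length), hReach, rfl⟩) hdf
    · -- M ≤ k → nonempty intersection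
      intro hM
      obtain ⟨_, ⟨s, hs, rfl⟩, hxk⟩ := enat_exists_of_sInf_le hM
      obtain ⟨w₁, w₂, hf1, hf2, hr1, hr2, hpi, hinf⟩ := hs
      -- extract a short fault-free path to an enabled state from df s.1 ≤ k
      obtain ⟨_, ⟨n, rfl, p, hp0, htrans, hen⟩, hnk⟩ := enat_exists_of_sInf_le hxk
      have hnk' : n ≤ k := Nat.cast_le.mp hnk
      have hPn : ∃ j, Enabled E f (p j) ∧ j ≤ n := ⟨n, hen, le_rfl⟩
      have hPexists : ∃ j, Enabled E f (p j) := ⟨n, hen⟩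
      set j := Nat.find hPexists with hjdef
      have hj : Enabled E f (p j) := Nat.find_spec hPexists
      have hjn : j ≤ n := Nat.find_min' hPexists hen
      have hlab : ∀ i : Fin j, ∃ b, E (p i.val) b (p (i.val + 1)) ∧ b ≠ f := by
        intro i
        obtain ⟨b, hb⟩ := htrans i.val (lt_of_lt_of_le i.isLt hjn)
        refine ⟨b, hb, fun hbf => ?_⟩
        exact Nat.find_min hPexists i.isLt ⟨_, hbf ▸ hb⟩
      choose b hb using hlab
      have hfv : f ∉ List.ofFn b := by
        intro hf
        obtain ⟨i, hi⟩ := List.mem_ofFn.mp hf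
        exact (hb i).2 hi
      have hrunv : RunOn E s.1 (List.ofFn b) (p j) := by
        refine ⟨p, hp0, by rw [List.length_ofFn], fun i => ?_⟩
        rw [List.get_ofFn]
        exact (hb (Fin.cast List.length_ofFn i)).1
      have hw1 : w₁ ∈ Lfk k :=
        ⟨hf1, s.1, hr1, List.ofFn b,
          by rw [List.length_ofFn]; exact le_trans hjn hnk', hfv, p j, hrunv, hj⟩
      -- w₂ is a prefix of an infinite fault-free trace
      have hw2 : w₂ ∈ PrefLω := by
        obtain ⟨pr, hpr0, hprn, hprE⟩ := hr2
        obtain ⟨pI, aI, hpI0, hIE⟩ := hinf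
        set n2 := w₂.length with hn2
        refine ⟨fun i => if h : i < n2 then w₂.get ⟨i, h⟩ else aI (i - n2),
          ⟨fun i => if i < n2 then pr i else pI (i - n2), ?_, ?_⟩, ?_⟩
        · by_cases h : 0 < n2
          · simp [h, hpr0]
          · have hn0 : n2 = 0 := by omega
            show (if 0 < n2 then pr 0 else pI (0 - n2)) = q0
            rw [if_neg h, Nat.zero_sub, hpI0, ← hprn, hn0, hpr0]
        · intro i
          by_cases h : i < n2
          · have hp1 : (if i + 1 < n2 then pr (i+1) else pI (i + 1 - n2)) = pr (i+1) := by
              by_cases h2 : i + 1 < n2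
              · simp [h2]
              · have he : i + 1 = n2 := by omega
                rw [if_neg h2, he, Nat.sub_self, hpI0, ← hprn]
            constructor
            · simp only [dif_pos h, if_pos h, hp1]
              exact hprE ⟨i, h⟩
            · simp only [dif_pos h]
              intro hf
              exact hf2 (hf ▸ List.get_mem w₂ ⟨i, h⟩)
          · have e1 : i - n2 + 1 = i + 1 - n2 := by omega
            simp only [dif_neg h, if_neg h, if_neg (show ¬ i + 1 < n2 by omega), ← e1]
            exact hIE (i - n2)
        · intro i
          simp [i.isLt]
          intro h
          exact absurd h (by have := i.isLt; omega)
      exact ⟨π w₁, ⟨w₁, hw1, rfl⟩, ⟨w₂, hw2, hpi.symm⟩⟩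
  have key2 : ∀ k : ℕ, Pred k ↔ (k : ℕ∞) < M := by
    intro k
    rw [← not_iff_not, key k, not_lt]
  refine ⟨fun k => ⟨fun h k' hk' => ?_, fun h => h k le_rfl⟩, key2⟩
  rw [key2] at h ⊢
  exact lt_of_le_of_lt (by exact_mod_cast hk') h
end

section
/- Let A be a finite automaton in which every state has at least one outgoing transition, and let L^ω_{¬f}(A) be the set of infinite traces containing no f. Then Pref(L^ω_{¬f}(A)) equals the set of finite fault-free traces w such that the run on w can reach a state q from which an infinite fault-free run exists; equivalently, the automaton A₂ obtained by restricting A to the set F_{¬f} of states admitting an infinite fault-free run, with all states accepting, accepts exactly Pref(Tr(NonFaulty^ω(A))) after unobservable relabeling is ignored. -/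
/-! A prefix of an infinite fault-free run ends in a state from which the remaining suffix is
again an infinite fault-free run. Conversely, a fault-free finite run into a state with an
infinite fault-free run continues along that run; gluing the two state sequences at the end
of the finite word gives an infinite fault-free run whose trace extends the word. -/

section

variable {Q A : Type*} (E : Q → A → Q → Prop) (f : A)

def IsFaultFreeRun (p : ℕ → Q) (a : ℕ → A) : Prop :=
  ∀ i, E (p i) (a i) (p (i + 1)) ∧ a i ≠ f

variable {E f} {p : ℕ → Q} {a : ℕ → A} {u : List A}

theorem IsFaultFreeRun.shift (h : IsFaultFreeRun E f p a) (n : ℕ) :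
    IsFaultFreeRun E f (fun k => p (n + k)) (fun k => a (n + k)) :=
  fun k => h (n + k)

theorem IsFaultFreeRun.infFF (h : IsFaultFreeRun E f p a) (n : ℕ) : InfFF E f (p n) :=
  ⟨_, _, rfl, h.shift n⟩

theorem IsFaultFreeRun.runOn (h : IsFaultFreeRun E f p a)
    (hu : ∀ i : Fin u.length, u.get i = a i) : RunOn E (p 0) u (p u.length) :=
  ⟨p, rfl, rfl, fun i => hu i ▸ (h i).1⟩

theorem IsFaultFreeRun.not_mem (h : IsFaultFreeRun E f p a)
    (hu : ∀ i : Fin u.length, u.get i = a i) : f ∉ u := by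
  intro hf
  obtain ⟨i, hi⟩ := List.get_of_mem hf
  exact (h i).2 (hu i ▸ hi)

theorem RunOn.exists_isFaultFreeRun_append {q q' : Q} (hrun : RunOn E q u q') (hu : f ∉ u)
    (hq' : InfFF E f q') :
    ∃ (a : ℕ → A) (p : ℕ → Q), p 0 = q ∧ IsFaultFreeRun E f p (u ++ₛ a) := by
  obtain ⟨p, rfl, rfl, hp⟩ := hrun
  obtain ⟨p', a', hp'0, h'⟩ := hq'
  set n := u.length
  let glued : ℕ → Q := fun i => if i ≤ n then p i else p' (i - n)
  have glued_add (k : ℕ) : glued (n + k) = p' k := by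
    cases k with
    | zero => simp [glued, hp'0]
    | succ k => simp [glued]
  refine ⟨a', glued, by simp [glued], fun i => ?_⟩
  rcases lt_or_ge i n with hi | hi
  · have hletter : (u ++ₛ a') i = u.get ⟨i, hi⟩ := Stream'.get_append_left _ _ _ hi
    simp only [hletter, glued, if_pos hi.le, if_pos (Nat.succ_le_of_lt hi)]
    exact ⟨hp ⟨i, hi⟩, fun hf => hu (hf ▸ List.get_mem u _)⟩
  · obtain ⟨k, rfl⟩ := Nat.exists_eq_add_of_le hi
    have hletter : (u ++ₛ a') (n + k) = a' k := Stream'.get_append_right k u a'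
    rw [hletter, glued_add, show n + k + 1 = n + (k + 1) from rfl, glued_add]
    exact h' k

end

theorem pref_omega_faultfree_characterization_general {Q A : Type*}
    (E : Q → A → Q → Prop) (f : A) (q0 : Q) :
    let Lω : Set (ℕ → A) :=
      {a | ∃ p : ℕ → Q, p 0 = q0 ∧ ∀ i, E (p i) (a i) (p (i + 1)) ∧ a i ≠ f}
    {u : List A | ∃ w ∈ Lω, ∀ i : Fin u.length, u.get i = w i.val} =
    {w : List A | f ∉ w ∧ ∃ q : Q, RunOn E q0 w q ∧ InfFF E f q} := by
  intro Lω
  ext u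
  constructor
  · rintro ⟨a, ⟨p, rfl, hp⟩, hu⟩
    exact ⟨IsFaultFreeRun.not_mem hp hu, p u.length, IsFaultFreeRun.runOn hp hu,
      IsFaultFreeRun.infFF hp u.length⟩
  · rintro ⟨hu, q, hrun, hq⟩
    obtain ⟨a, p, hp0, hp⟩ := hrun.exists_isFaultFreeRun_append hu hq
    exact ⟨u ++ₛ a, ⟨p, hp0, hp⟩, fun i => (Stream'.get_append_left _ _ _ i.isLt).symm⟩

/-- in an automaton where every state has an outgoing transition, the
finite prefixes of infinite fault-free traces are exactly the finite fault-free traces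
whose run can reach a state from which an infinite fault-free run exists. -/
theorem pref_omega_faultfree_characterization {Q A : Type*}
    (E : Q → A → Q → Prop) (f : A) (q0 : Q)
    (hout : ∀ q : Q, ∃ (a : A) (q' : Q), E q a q') :
    let Lω : Set (ℕ → A) :=
      {a | ∃ p : ℕ → Q, p 0 = q0 ∧ ∀ i, E (p i) (a i) (p (i + 1)) ∧ a i ≠ f}
    {u : List A | ∃ w ∈ Lω, ∀ i : Fin u.length, u.get i = w i.val} =
    {w : List A | f ∉ w ∧ ∃ q : Q, RunOn E q0 w q ∧ InfFF E f q} :=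
  pref_omega_faultfree_characterization_general E f q0
end
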